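/- Let p, q ∈ ℤ with p+q+3 ≠ 0 and p+q−1 ≠ 0, and let k ∈ ℕ with k ≥ 1. Then m_{p,q}^k = ((p+q+1)(p+2)(q+2))/((2p+1)(2q+1)(p+q+3))·m_{p+1,q+1}^{k−1} + ((p+q+1)(p−1)(q−1))/((2p+1)(2q+1)(p+q−1))·m_{p−1,q−1}^{k−1} + ((p+2)(q−1))/((2p+1)(2q+1))·m_{p+1,q−1}^{k−1} + ((p−1)(q+2))/((2p+1)(2q+1))·m_{p−1,q+1}^{k−1}. -/

import Mathlib

open Polynomial


/-- The Legendre polynomial of degree `n` on `[-1,1]`, via Rodrigues' formula. -/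
noncomputable def legP (n : ℕ) (x : ℝ) : ℝ :=
  (1 / (2 ^ n * n.factorial)) * iteratedDeriv n (fun y : ℝ => (y ^ 2 - 1) ^ n) x

/-- The complex-valued extension of the Legendre polynomials to integer degrees,
with `P_{-n-1}(x) = i * P_n(x)` for `n ∈ ℕ`. -/
noncomputable def legPZ (n : ℤ) (x : ℝ) : ℂ :=
  if 0 ≤ n then (legP n.toNat x : ℂ) else Complex.I * (legP (-n - 1).toNat x : ℂ)

/-- The complex-valued polynomial `I_n` defined by `(2n+1) I_n(x) = P_{n+1}(x) - P_{n-1}(x)`. -/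
noncomputable def legI (n : ℤ) (x : ℝ) : ℂ :=
  (legPZ (n + 1) x - legPZ (n - 1) x) / (2 * (n : ℂ) + 1)

/-- The moment `m_{p,q}^k = (p+q+1) ∫_{-1}^1 x^{2k} I_p(x) I_q(x) dx`. -/
noncomputable def momI (p q : ℤ) (k : ℕ) : ℂ :=
  ((p : ℂ) + q + 1) * ∫ x in (-1 : ℝ)..1, (x : ℂ) ^ (2 * k) * legI p x * legI q x


lemma leib1 (m : ℕ) (p : ℝ[X]) :
    derivative^[m + 1] (X * p) =
      X * derivative^[m + 1] p + ((m + 1 : ℕ) : ℝ[X]) * derivative^[m] p := by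
  induction m with
  | zero => simp [derivative_mul]; ring
  | succ m ih =>
      rw [Function.iterate_succ_apply' derivative (m + 1) (X * p), ih,
        show (m + 1 + 1) = (m + 1) + 1 from rfl,
        Function.iterate_succ_apply' derivative (m + 1) p,
        Function.iterate_succ_apply' derivative m p]
      simp only [derivative_add, derivative_mul, derivative_X, derivative_natCast,
        derivative_one, C_eq_natCast]
      push_cast
      ring

lemma leib2 (m : ℕ) (r : ℝ[X]) :
    derivative^[m + 1] (((X : ℝ[X]) ^ 2 - 1) * derivative r) =
      ((X : ℝ[X]) ^ 2 - 1) * derivative (derivative^[m + 1] r)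
        + ((2 * (m + 1) : ℕ) : ℝ[X]) * (X * derivative^[m + 1] r)
        + (((m + 1) * m : ℕ) : ℝ[X]) * derivative^[m] r := by
  induction m with
  | zero =>
      rw [show (0 + 1 : ℕ) = 1 from rfl]
      simp only [Function.iterate_one, Function.iterate_zero, id_eq, derivative_add,
        derivative_mul, derivative_X, derivative_natCast, derivative_one, derivative_pow,
        derivative_sub, C_eq_natCast, derivative_zero]
      push_cast
      ring
  | succ m ih =>
      rw [Function.iterate_succ_apply' derivative (m + 1)
          (((X : ℝ[X]) ^ 2 - 1) * derivative r), ih,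
        show (m + 1 + 1) = (m + 1) + 1 from rfl,
        Function.iterate_succ_apply' derivative (m + 1) r,
        Function.iterate_succ_apply' derivative m r]
      simp only [derivative_add, derivative_mul, derivative_X, derivative_natCast,
        derivative_one, derivative_pow, derivative_sub, C_eq_natCast]
      push_cast
      ring

noncomputable def legU (n : ℕ) : ℝ[X] := ((X : ℝ[X]) ^ 2 - 1) ^ n

noncomputable def legA (n : ℕ) : ℝ[X] := derivative^[n] (legU n)

lemma legU_succ (n : ℕ) : legU (n + 1) = ((X : ℝ[X]) ^ 2 - 1) * legU n := by
  rw [legU, legU, pow_succ]; ring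

lemma deriv_legU (n : ℕ) :
    derivative (legU (n + 1)) = ((2 * (n + 1) : ℕ) : ℝ[X]) * (X * legU n) := by
  simp only [legU, derivative_pow, derivative_sub, derivative_pow, derivative_X,
    derivative_one, C_eq_natCast]
  push_cast
  ring

noncomputable def legW (m : ℕ) : ℝ[X] := derivative^[m] (legU (m + 1))

lemma E3 (m : ℕ) : derivative (legW m) = legA (m + 1) := by
  rw [legW, legA, ← Function.iterate_succ_apply' derivative m]

lemma E1 (m : ℕ) :
    legA (m + 2) = ((2 * (m + 2) : ℕ) : ℝ[X]) * (X * legA (m + 1))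
      + ((2 * (m + 2) * (m + 1) : ℕ) : ℝ[X]) * legW m := by
  have h1 : legA (m + 2) = derivative^[m + 1] (derivative (legU (m + 2))) := by
    rw [legA, Function.iterate_succ_apply]
  rw [h1, deriv_legU (m + 1),
    show ((2 * (m + 1 + 1) : ℕ) : ℝ[X]) = C ((2 * (m + 2) : ℕ) : ℝ) by
      rw [C_eq_natCast],
    iterate_derivative_C_mul, leib1 m (legU (m + 1))]
  rw [legA, legW, C_eq_natCast]
  push_cast
  ring

lemma E2 (m : ℕ) :
    ((X : ℝ[X]) ^ 2 - 1) * derivative (legA (m + 1)) =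
      (((m + 1) * (m + 2) : ℕ) : ℝ[X]) * legW m := by
  have base : ((X : ℝ[X]) ^ 2 - 1) * derivative (legU (m + 1))
      = ((2 * (m + 1) : ℕ) : ℝ[X]) * (X * legU (m + 1)) := by
    rw [deriv_legU m, legU_succ m]
    push_cast
    ring
  have h := congrArg (derivative^[m + 1]) base
  rw [leib2 m (legU (m + 1)),
    show ((2 * (m + 1) : ℕ) : ℝ[X]) = C ((2 * (m + 1) : ℕ) : ℝ) by rw [C_eq_natCast],
    iterate_derivative_C_mul, leib1 m (legU (m + 1))] at h
  rw [legA, legW] at *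
  rw [C_eq_natCast] at h
  push_cast at h ⊢
  linear_combination h

lemma legA_zero : legA 0 = 1 := by simp [legA, legU]

lemma legA_one : legA 1 = ((2 : ℕ) : ℝ[X]) * X := by
  simp only [legA, legU, pow_one, Function.iterate_one, derivative_sub, derivative_pow,
    derivative_X, derivative_one, C_eq_natCast]
  push_cast
  ring

lemma iA : ∀ j : ℕ, derivative (legA (j + 1)) =
    ((2 * (j + 1) : ℕ) : ℝ[X]) * (X * derivative (legA j) + ((j + 1 : ℕ) : ℝ[X]) * legA j) := by
  intro j
  match j with
  | 0 =>
      rw [legA_zero, legA_one]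
      simp only [derivative_mul, derivative_X, derivative_natCast, derivative_one]
      push_cast
      ring
  | m + 1 =>
      have h := congrArg derivative (E1 m)
      simp only [derivative_add, derivative_mul, derivative_X, derivative_natCast] at h
      rw [E3 m] at h
      push_cast at h ⊢
      linear_combination h

lemma ivA : ∀ j : ℕ, 2 * (((X : ℝ[X]) ^ 2 - 1) * derivative (legA j)) =
    legA (j + 1) - ((2 * (j + 1) : ℕ) : ℝ[X]) * (X * legA j) := by
  intro j
  match j with
  | 0 =>
      rw [legA_zero, legA_one]
      simp only [derivative_one]
      push_cast
      ring
  | m + 1 =>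
      have h1 := E1 m
      have h2 := E2 m
      push_cast at h1 h2 ⊢
      linear_combination 2 * h2 - h1

lemma bonnetA (m : ℕ) :
    legA (m + 2) = ((2 * (2 * m + 3) : ℕ) : ℝ[X]) * (X * legA (m + 1))
      - ((4 * (m + 1) ^ 2 : ℕ) : ℝ[X]) * legA m := by
  have h1 := ivA (m + 1)
  have h2 := iA m
  have h3 := ivA m
  push_cast at h1 h2 h3 ⊢
  linear_combination (-1 : ℝ[X]) * h1 + (2 * ((X : ℝ[X]) ^ 2 - 1)) * h2
    + (2 * ((m : ℝ[X]) + 1) * X) * h3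

lemma polyEval_iteratedDeriv (p : ℝ[X]) (m : ℕ) :
    iteratedDeriv m (fun y => p.eval y) = fun y => (derivative^[m] p).eval y := by
  induction m with
  | zero => simp
  | succ m ih =>
      rw [iteratedDeriv_succ, ih, Function.iterate_succ_apply']
      funext y
      exact Polynomial.deriv (p := derivative^[m] p)

lemma legP_eval (n : ℕ) (x : ℝ) :
    legP n x = ((2 : ℝ) ^ n * n.factorial)⁻¹ * (legA n).eval x := by
  have hfun : (fun y : ℝ => (y ^ 2 - 1) ^ n) = fun y => (legU n).eval y := by
    funext y; simp [legU]
  rw [legP, hfun, polyEval_iteratedDeriv, one_div, legA]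

lemma legP_zero (x : ℝ) : legP 0 x = 1 := by
  rw [legP_eval, legA_zero]; simp

lemma legP_one (x : ℝ) : legP 1 x = x := by
  rw [legP_eval, legA_one]; simp

lemma bonnet_legP (m : ℕ) (x : ℝ) :
    (2 * (m : ℝ) + 3) * x * legP (m + 1) x
      = ((m : ℝ) + 2) * legP (m + 2) x + ((m : ℝ) + 1) * legP m x := by
  have hA := congrArg (Polynomial.eval x) (bonnetA m)
  simp only [eval_mul, eval_add, eval_sub, eval_natCast, eval_X, eval_pow] at hA
  push_cast at hA
  rw [legP_eval, legP_eval, legP_eval]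
  have h2 : (2 : ℝ) ^ m ≠ 0 := by positivity
  have hf : ((m.factorial : ℝ)) ≠ 0 := by
    exact_mod_cast m.factorial_ne_zero
  have e1 : ((2 : ℝ) ^ (m + 1) * (m + 1).factorial)
      = (2 * ((m : ℝ) + 1)) * (2 ^ m * m.factorial) := by
    rw [pow_succ, Nat.factorial_succ]; push_cast; ring
  have e2 : ((2 : ℝ) ^ (m + 2) * (m + 2).factorial)
      = (2 * ((m : ℝ) + 2)) * (2 * ((m : ℝ) + 1)) * (2 ^ m * m.factorial) := by
    rw [pow_succ, pow_succ, Nat.factorial_succ, Nat.factorial_succ]; push_cast; ring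
  rw [e1, e2]
  have hm1 : (m : ℝ) + 1 ≠ 0 := by positivity
  have hm2 : (m : ℝ) + 2 ≠ 0 := by positivity
  field_simp
  rw [hA]; ring

lemma legPZ_coe (k : ℕ) (x : ℝ) : legPZ k x = (legP k x : ℂ) := by
  rw [legPZ, if_pos (by positivity), Int.toNat_natCast]

lemma legPZ_neg (k : ℕ) (x : ℝ) : legPZ (-(k : ℤ) - 1) x = Complex.I * (legP k x : ℂ) := by
  rw [legPZ, if_neg (by omega)]
  have h : (-(-(k : ℤ) - 1) - 1) = (k : ℤ) := by ring
  rw [h, Int.toNat_natCast]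

lemma bonnetZ (n : ℤ) (x : ℝ) :
    (2 * (n : ℂ) + 1) * x * legPZ n x
      = ((n : ℂ) + 1) * legPZ (n + 1) x + (n : ℂ) * legPZ (n - 1) x := by
  cases n with
  | ofNat k =>
      match k with
      | 0 =>
          have h0 : ((Int.ofNat 0 : ℤ) - 1) = -(0 : ℤ) - 1 := by decide
          rw [show ((Int.ofNat 0 : ℤ)) = ((0 : ℕ) : ℤ) from rfl] at *
          rw [show ((0 : ℕ) : ℤ) + 1 = ((1 : ℕ) : ℤ) by omega,
            show ((0 : ℕ) : ℤ) - 1 = -((0 : ℕ) : ℤ) - 1 by omega,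
            legPZ_coe, legPZ_coe, legPZ_neg, legP_zero, legP_one]
          push_cast
          ring
      | m + 1 =>
          rw [show (Int.ofNat (m + 1) : ℤ) = ((m + 1 : ℕ) : ℤ) from rfl]
          rw [show ((m + 1 : ℕ) : ℤ) + 1 = ((m + 2 : ℕ) : ℤ) by omega,
            show ((m + 1 : ℕ) : ℤ) - 1 = ((m : ℕ) : ℤ) by omega,
            legPZ_coe, legPZ_coe, legPZ_coe]
          have h := congrArg (fun t : ℝ => (t : ℂ)) (bonnet_legP m x)
          push_cast at h ⊢
          linear_combination h
  | negSucc k =>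
      match k with
      | 0 =>
          rw [show (Int.negSucc 0 : ℤ) = -((0 : ℕ) : ℤ) - 1 by decide,
            show (-((0 : ℕ) : ℤ) - 1) + 1 = ((0 : ℕ) : ℤ) by omega,
            show (-((0 : ℕ) : ℤ) - 1) - 1 = -((1 : ℕ) : ℤ) - 1 by omega,
            legPZ_neg, legPZ_coe, legPZ_neg, legP_zero, legP_one]
          push_cast
          ring
      | m + 1 =>
          rw [show (Int.negSucc (m + 1) : ℤ) = -((m + 1 : ℕ) : ℤ) - 1 by
              rw [Int.negSucc_eq]; push_cast; ring,
            show (-((m + 1 : ℕ) : ℤ) - 1) + 1 = -((m : ℕ) : ℤ) - 1 by omega,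
            show (-((m + 1 : ℕ) : ℤ) - 1) - 1 = -((m + 2 : ℕ) : ℤ) - 1 by omega,
            legPZ_neg, legPZ_neg, legPZ_neg]
          have h := congrArg (fun t : ℝ => (t : ℂ)) (bonnet_legP m x)
          push_cast at h ⊢
          linear_combination (-Complex.I) * h

lemma oddC (n : ℤ) : 2 * (n : ℂ) + 1 ≠ 0 := by
  have h : ((2 * n + 1 : ℤ) : ℂ) ≠ 0 := Int.cast_ne_zero.mpr (by omega)
  push_cast at h
  exact h

lemma legI_rec (n : ℤ) (x : ℝ) :
    (2 * (n : ℂ) + 1) * ((x : ℂ) * legI n x)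
      = ((n : ℂ) + 2) * legI (n + 1) x + ((n : ℂ) - 1) * legI (n - 1) x := by
  have b1 := bonnetZ (n + 1) x
  have b2 := bonnetZ (n - 1) x
  rw [show n + 1 + 1 = n + 2 by ring, show n + 1 - 1 = n by ring] at b1
  rw [show n - 1 + 1 = n by ring, show n - 1 - 1 = n - 2 by ring] at b2
  rw [legI, legI, legI,
    show n + 1 + 1 = n + 2 by ring, show n + 1 - 1 = n by ring,
    show n - 1 + 1 = n by ring, show n - 1 - 1 = n - 2 by ring]
  have d0 := oddC n
  have d1 : 2 * ((n : ℂ) + 1) + 1 ≠ 0 := fun hc => (oddC (n + 1)) (by push_cast; linear_combination hc)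
  have d2 : 2 * ((n : ℂ) - 1) + 1 ≠ 0 := fun hc => (oddC (n - 1)) (by push_cast; linear_combination hc)
  push_cast at b1 b2 ⊢
  field_simp
  linear_combination (2 * ((n : ℂ) - 1) + 1) * b1 - (2 * ((n : ℂ) + 1) + 1) * b2

lemma legP_cont (n : ℕ) : Continuous (fun x => legP n x) := by
  have : (fun x => legP n x) = fun x => ((2 : ℝ) ^ n * n.factorial)⁻¹ * (legA n).eval x := by
    funext x; rw [legP_eval]
  rw [this]
  exact continuous_const.mul (legA n).continuous_aeval

lemma legPZ_cont (n : ℤ) : Continuous (fun x => legPZ n x) := by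
  by_cases h : 0 ≤ n
  · simp only [legPZ, if_pos h]
    exact Complex.continuous_ofReal.comp (legP_cont _)
  · simp only [legPZ, if_neg h]
    exact continuous_const.mul (Complex.continuous_ofReal.comp (legP_cont _))

lemma legI_cont (n : ℤ) : Continuous (fun x => legI n x) := by
  simp only [legI]
  exact ((legPZ_cont (n + 1)).sub (legPZ_cont (n - 1))).div_const _

set_option maxHeartbeats 1000000 in
theorem statement_8 (p q : ℤ) (hpq3 : p + q + 3 ≠ 0) (hpq1 : p + q - 1 ≠ 0)
    (k : ℕ) (hk : 1 ≤ k) :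
    momI p q k
      = (((p : ℂ) + q + 1) * ((p : ℂ) + 2) * ((q : ℂ) + 2)) /
          ((2 * (p : ℂ) + 1) * (2 * (q : ℂ) + 1) * ((p : ℂ) + q + 3)) * momI (p + 1) (q + 1) (k - 1)
        + (((p : ℂ) + q + 1) * ((p : ℂ) - 1) * ((q : ℂ) - 1)) /
          ((2 * (p : ℂ) + 1) * (2 * (q : ℂ) + 1) * ((p : ℂ) + q - 1)) * momI (p - 1) (q - 1) (k - 1)
        + (((p : ℂ) + 2) * ((q : ℂ) - 1)) / ((2 * (p : ℂ) + 1) * (2 * (q : ℂ) + 1)) *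
            momI (p + 1) (q - 1) (k - 1)
        + (((p : ℂ) - 1) * ((q : ℂ) + 2)) / ((2 * (p : ℂ) + 1) * (2 * (q : ℂ) + 1)) *
            momI (p - 1) (q + 1) (k - 1) := by
  obtain ⟨j, rfl⟩ : ∃ j, k = j + 1 := ⟨k - 1, by omega⟩
  simp only [Nat.add_sub_cancel]
  have hdp := oddC p
  have hdq := oddC q
  have hc3 : (p : ℂ) + q + 3 ≠ 0 := by
    have : ((p + q + 3 : ℤ) : ℂ) ≠ 0 := Int.cast_ne_zero.mpr hpq3
    push_cast at this; exact this
  have hc1 : (p : ℂ) + q - 1 ≠ 0 := by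
    have : ((p + q - 1 : ℤ) : ℂ) ≠ 0 := Int.cast_ne_zero.mpr hpq1
    push_cast at this; exact this
  set c1 : ℂ := ((p : ℂ) + 2) * ((q : ℂ) + 2) / ((2 * (p : ℂ) + 1) * (2 * (q : ℂ) + 1)) with hc1def
  set c2 : ℂ := ((p : ℂ) - 1) * ((q : ℂ) - 1) / ((2 * (p : ℂ) + 1) * (2 * (q : ℂ) + 1)) with hc2def
  set c3 : ℂ := ((p : ℂ) + 2) * ((q : ℂ) - 1) / ((2 * (p : ℂ) + 1) * (2 * (q : ℂ) + 1)) with hc3def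
  set c4 : ℂ := ((p : ℂ) - 1) * ((q : ℂ) + 2) / ((2 * (p : ℂ) + 1) * (2 * (q : ℂ) + 1)) with hc4def
  have hint : ∀ a b : ℤ, IntervalIntegrable
      (fun x : ℝ => (x : ℂ) ^ (2 * j) * legI a x * legI b x) MeasureTheory.volume (-1) 1 :=
    fun a b => (((Complex.continuous_ofReal.pow (2 * j)).mul (legI_cont a)).mul
      (legI_cont b)).intervalIntegrable _ _
  have key : ∀ x : ℝ, (x : ℂ) ^ (2 * (j + 1)) * legI p x * legI q x =
      c1 * ((x : ℂ) ^ (2 * j) * legI (p + 1) x * legI (q + 1) x)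
      + c2 * ((x : ℂ) ^ (2 * j) * legI (p - 1) x * legI (q - 1) x)
      + c3 * ((x : ℂ) ^ (2 * j) * legI (p + 1) x * legI (q - 1) x)
      + c4 * ((x : ℂ) ^ (2 * j) * legI (p - 1) x * legI (q + 1) x) := by
    intro x
    have hp' : (x : ℂ) * legI p x
        = (((p : ℂ) + 2) * legI (p + 1) x + ((p : ℂ) - 1) * legI (p - 1) x) / (2 * (p : ℂ) + 1) := by
      rw [eq_div_iff hdp]
      linear_combination legI_rec p x
    have hq' : (x : ℂ) * legI q x
        = (((q : ℂ) + 2) * legI (q + 1) x + ((q : ℂ) - 1) * legI (q - 1) x) / (2 * (q : ℂ) + 1) := by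
      rw [eq_div_iff hdq]
      linear_combination legI_rec q x
    calc (x : ℂ) ^ (2 * (j + 1)) * legI p x * legI q x
        = (x : ℂ) ^ (2 * j) * (((x : ℂ) * legI p x) * ((x : ℂ) * legI q x)) := by ring
      _ = _ := by
          rw [hp', hq', hc1def, hc2def, hc3def, hc4def]
          field_simp
          ring
  have hsplit : (∫ x in (-1 : ℝ)..1, (x : ℂ) ^ (2 * (j + 1)) * legI p x * legI q x)
      = c1 * (∫ x in (-1 : ℝ)..1, (x : ℂ) ^ (2 * j) * legI (p + 1) x * legI (q + 1) x)
      + c2 * (∫ x in (-1 : ℝ)..1, (x : ℂ) ^ (2 * j) * legI (p - 1) x * legI (q - 1) x)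
      + c3 * (∫ x in (-1 : ℝ)..1, (x : ℂ) ^ (2 * j) * legI (p + 1) x * legI (q - 1) x)
      + c4 * (∫ x in (-1 : ℝ)..1, (x : ℂ) ^ (2 * j) * legI (p - 1) x * legI (q + 1) x) := by
    simp only [key]
    rw [intervalIntegral.integral_add (((hint _ _).const_mul c1).add
        (((hint _ _).const_mul c2)) |>.add ((hint _ _).const_mul c3)) ((hint _ _).const_mul c4),
      intervalIntegral.integral_add (((hint _ _).const_mul c1).add
        (((hint _ _).const_mul c2))) ((hint _ _).const_mul c3),
      intervalIntegral.integral_add ((hint _ _).const_mul c1) ((hint _ _).const_mul c2),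
      intervalIntegral.integral_const_mul, intervalIntegral.integral_const_mul,
      intervalIntegral.integral_const_mul, intervalIntegral.integral_const_mul]
  rw [momI, momI, momI, momI, momI, hsplit]
  set F1 := ∫ x in (-1 : ℝ)..1, (x : ℂ) ^ (2 * j) * legI (p + 1) x * legI (q + 1) x with hF1
  set F2 := ∫ x in (-1 : ℝ)..1, (x : ℂ) ^ (2 * j) * legI (p - 1) x * legI (q - 1) x with hF2
  set F3 := ∫ x in (-1 : ℝ)..1, (x : ℂ) ^ (2 * j) * legI (p + 1) x * legI (q - 1) x with hF3
  set F4 := ∫ x in (-1 : ℝ)..1, (x : ℂ) ^ (2 * j) * legI (p - 1) x * legI (q + 1) x with hF4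
  push_cast
  simp only [hc1def, hc2def, hc3def, hc4def]
  have e1 : (((p : ℂ) + q + 1) * ((p : ℂ) + 2) * ((q : ℂ) + 2)) /
        ((2 * (p : ℂ) + 1) * (2 * (q : ℂ) + 1) * ((p : ℂ) + q + 3)) * (((p : ℂ) + q + 3) * F1)
      = (((p : ℂ) + q + 1) * ((p : ℂ) + 2) * ((q : ℂ) + 2)) /
        ((2 * (p : ℂ) + 1) * (2 * (q : ℂ) + 1)) * F1 := by
    field_simp
  have e2 : (((p : ℂ) + q + 1) * ((p : ℂ) - 1) * ((q : ℂ) - 1)) /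
        ((2 * (p : ℂ) + 1) * (2 * (q : ℂ) + 1) * ((p : ℂ) + q - 1)) * (((p : ℂ) + q - 1) * F2)
      = (((p : ℂ) + q + 1) * ((p : ℂ) - 1) * ((q : ℂ) - 1)) /
        ((2 * (p : ℂ) + 1) * (2 * (q : ℂ) + 1)) * F2 := by
    field_simp
  linear_combination -e1 - e2
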